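/- arXiv:2007.12208 — 2 statements merged into one kernel-verified Lean document; each statement's English description precedes it below -/
import Mathlib

section
/- If a group G has a noncyclic finite homomorphic image, then G admits a finite cover by proper subgroups. -/
/-- If a group `G` has a finite noncyclic homomorphic image, then `G` admits a finite cover
by proper subgroups. -/
theorem finite_cover_of_noncyclic_finite_image {G Q : Type*} [Group G] [Group Q] [Finite Q]
    (hQ : ¬ IsCyclic Q) (φ : G →* Q) (hφ : Function.Surjective φ) :
    ∃ 𝒞 : Finset (Subgroup G), (∀ H ∈ 𝒞, H ≠ ⊤) ∧ ∀ g : G, ∃ H ∈ 𝒞, g ∈ H := by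
  classical
  have : Fintype Q := Fintype.ofFinite Q
  refine ⟨Finset.univ.image (fun q : Q => (Subgroup.zpowers q).comap φ), ?_, ?_⟩
  · intro H hH
    obtain ⟨q, -, rfl⟩ := Finset.mem_image.mp hH
    intro htop
    have hz : Subgroup.zpowers q = ⊤ := by
      have := Subgroup.comap_injective (f := φ) hφ
      apply this
      simpa [Subgroup.comap_top] using htop
    exact hQ ⟨q, fun x => by
      have : x ∈ Subgroup.zpowers q := hz ▸ Subgroup.mem_top x
      exact this⟩
  · intro g
    exact ⟨(Subgroup.zpowers (φ g)).comap φ,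
      Finset.mem_image.mpr ⟨φ g, Finset.mem_univ _, rfl⟩,
      Subgroup.mem_comap.mpr (Subgroup.mem_zpowers _)⟩
end

section
/- Let H be a subgroup of a finite group G, x ∈ G with conjugacy class K, and θ the permutation character of the action of G on the right cosets of H. Then |K ∩ H| = θ(x)·|K|/[G:H]. -/
/-- Right multiplication by `x` on the set of right cosets of a subgroup `H`. -/
def rightCosetMul {G : Type*} [Group G] (H : Subgroup G) (x : G) :
    Quotient (QuotientGroup.rightRel H) → Quotient (QuotientGroup.rightRel H) :=
  Quotient.map (fun g => g * x) (fun a b hab => by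
    have h : b * a⁻¹ ∈ H := QuotientGroup.rightRel_apply.mp hab
    refine QuotientGroup.rightRel_apply.mpr ?_
    simpa [mul_inv_rev, ← mul_assoc] using h)

open Finset in
lemma fiber_count {α β : Type*} [Fintype α] [Fintype β] [DecidableEq β]
    (f : α → β) (p : β → Prop) [DecidablePred p] (n : ℕ)
    (h2 : ∀ a, p (f a)) (h1 : ∀ b, p b → Nat.card {a // f a = b} = n) :
    Nat.card α = Nat.card {b // p b} * n := by
  classical
  rw [Nat.card_eq_fintype_card, Nat.card_eq_fintype_card]
  have key : (univ : Finset α).card = ∑ b ∈ univ.filter p, (univ.filter fun a => f a = b).card :=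
    Finset.card_eq_sum_card_fiberwise (fun a _ => mem_filter.2 ⟨mem_univ _, h2 a⟩)
  have : ∀ b ∈ univ.filter p, (univ.filter fun a => f a = b).card = n := by
    intro b hb
    have := h1 b (mem_filter.1 hb).2
    rw [Nat.card_eq_fintype_card, Fintype.card_subtype] at this
    exact this
  rw [Fintype.card, key, Finset.sum_congr rfl this, Finset.sum_const, smul_eq_mul,
    Fintype.card_subtype]

lemma conj_count {G : Type*} [Group G] [Finite G] (x : G) (s : Set G) :
    Nat.card {g : G | g * x * g⁻¹ ∈ s} =
      Nat.card {y : G | IsConj x y ∧ y ∈ s} * Nat.card (Subgroup.centralizer {x}) := by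
  classical
  have := Fintype.ofFinite G
  refine fiber_count (fun a : {g : G | g * x * g⁻¹ ∈ s} => a.1 * x * a.1⁻¹)
    (fun y => IsConj x y ∧ y ∈ s) _ (fun a => ⟨isConj_iff.2 ⟨a.1, rfl⟩, a.2⟩) ?_
  rintro y ⟨hconj, hys⟩
  obtain ⟨c, hy⟩ := isConj_iff.1 hconj
  have hval : ∀ z : Subgroup.centralizer ({x} : Set G), (c * z.1) * x * (c * z.1)⁻¹ = y := by
    intro z
    have hz : z.1 * x = x * z.1 := Subgroup.mem_centralizer_singleton_iff.1 z.2
    have h1 : (c * z.1) * x * (c * z.1)⁻¹ = c * (z.1 * x * z.1⁻¹) * c⁻¹ := by group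
    have h2 : z.1 * x * z.1⁻¹ = x := by rw [hz]; group
    rw [h1, h2, hy]
  refine Nat.card_congr ?_
  refine ⟨fun a => ⟨c⁻¹ * a.1.1, Subgroup.mem_centralizer_singleton_iff.2 ?_⟩,
    fun z => ⟨⟨c * z.1, by show (c * z.1) * x * (c * z.1)⁻¹ ∈ s; rw [hval z]; exact hys⟩,
      hval z⟩,
    fun a => Subtype.ext (Subtype.ext (by show c * (c⁻¹ * a.1.1) = a.1.1; group)),
    fun z => Subtype.ext (by show c⁻¹ * (c * z.1) = z.1; group)⟩
  have ha : (a.1.1 : G) * x * a.1.1⁻¹ = c * x * c⁻¹ := a.2.trans hy.symm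
  show (c⁻¹ * a.1.1) * x = x * (c⁻¹ * a.1.1)
  calc c⁻¹ * a.1.1 * x = c⁻¹ * (a.1.1 * x * a.1.1⁻¹) * a.1.1 := by group
    _ = c⁻¹ * (c * x * c⁻¹) * a.1.1 := by rw [ha]
    _ = x * (c⁻¹ * a.1.1) := by group

lemma coset_count {G : Type*} [Group G] [Finite G] (H : Subgroup G) (x : G) :
    Nat.card {g : G | g * x * g⁻¹ ∈ H} =
      Nat.card {C : Quotient (QuotientGroup.rightRel H) | rightCosetMul H x C = C} *
        Nat.card H := by
  classical
  have := Fintype.ofFinite G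
  have := Fintype.ofFinite (Quotient (QuotientGroup.rightRel H))
  refine fiber_count (fun a : {g : G | g * x * g⁻¹ ∈ H} => Quotient.mk _ a.1)
    (fun C => rightCosetMul H x C = C) _ ?_ ?_
  · intro a
    show rightCosetMul H x (Quotient.mk _ a.1) = Quotient.mk _ a.1
    refine (Quotient.sound ?_ : Quotient.mk _ (a.1 * x) = _)
    refine QuotientGroup.rightRel_apply.mpr ?_
    have : a.1 * (a.1 * x)⁻¹ = (a.1 * x * a.1⁻¹)⁻¹ := by group
    rw [this]
    exact inv_mem a.2
  · intro C hC
    induction C using Quotient.inductionOn with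
    | h b =>
      have hb : (b * x) * b⁻¹ ∈ H := by
        have : Quotient.mk _ (b * x) = Quotient.mk (QuotientGroup.rightRel H) b := hC
        have h2 := QuotientGroup.rightRel_apply.mp (Quotient.exact this)
        -- h2 : b * (b * x)⁻¹ ∈ H
        have h3 : (b * (b * x)⁻¹)⁻¹ = b * x * b⁻¹ := by group
        simpa [h3] using inv_mem h2
      refine Nat.card_congr ?_
      refine ⟨fun a => ⟨a.1.1 * b⁻¹, ?_⟩,
        fun h => ⟨⟨h.1 * b, ?_⟩, ?_⟩,
        fun a => Subtype.ext (Subtype.ext (by show a.1.1 * b⁻¹ * b = a.1.1; group)),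
        fun h => Subtype.ext (by show h.1 * b * b⁻¹ = h.1; group)⟩
      · have h2 := QuotientGroup.rightRel_apply.mp (Quotient.exact (a.2 : _ = _))
        -- h2 : b * a⁻¹ ∈ H
        have h3 : (b * a.1.1⁻¹)⁻¹ = a.1.1 * b⁻¹ := by group
        simpa [h3] using inv_mem h2
      · show (h.1 * b) * x * (h.1 * b)⁻¹ ∈ H
        have h3 : (h.1 * b) * x * (h.1 * b)⁻¹ = h.1 * (b * x * b⁻¹) * h.1⁻¹ := by group
        rw [h3]
        exact mul_mem (mul_mem h.2 hb) (inv_mem h.2)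
      · show Quotient.mk _ (h.1 * b) = Quotient.mk (QuotientGroup.rightRel H) b
        refine Quotient.sound (QuotientGroup.rightRel_apply.mpr ?_)
        have h3 : b * (h.1 * b)⁻¹ = h.1⁻¹ := by group
        rw [h3]
        exact inv_mem h.2

/-- Let `H` be a subgroup of a finite group `G`, `x ∈ G` with conjugacy class `K`, and `θ`
the permutation character of the action of `G` on the right cosets of `H` (so `θ(x)` is the
number of right cosets fixed by right multiplication by `x`).  Then
`|K ∩ H| = θ(x)·|K|/[G:H]`. -/
theorem card_conjClass_inter_subgroup {G : Type*} [Group G] [Finite G]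
    (H : Subgroup G) (x : G) :
    Nat.card {g : G | IsConj x g ∧ g ∈ H} =
      Nat.card {C : Quotient (QuotientGroup.rightRel H) | rightCosetMul H x C = C} *
        Nat.card {g : G | IsConj x g} / H.index := by
  classical
  set c := Nat.card (Subgroup.centralizer ({x} : Set G)) with hc
  have hA := coset_count H x
  have hB := conj_count x (H : Set G)
  have hC := conj_count x (Set.univ : Set G)
  simp only [Set.mem_univ, and_true, Set.setOf_true, Nat.card_univ] at hC
  -- hC : Nat.card G = Nat.card {g | IsConj x g} * c
  set θ := Nat.card {C : Quotient (QuotientGroup.rightRel H) | rightCosetMul H x C = C}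
  set K := Nat.card {g : G | IsConj x g}
  set k := Nat.card {g : G | IsConj x g ∧ g ∈ H}
  have hkB : Nat.card {g : G | g * x * g⁻¹ ∈ H} = k * c := hB
  have hLag : Nat.card H * H.index = Nat.card G := Subgroup.card_mul_index H
  have hcpos : 0 < c := Nat.card_pos
  have hind : H.index ≠ 0 := Subgroup.index_ne_zero_of_finite
  have key : θ * K = k * H.index := by
    have h1 : θ * K * c = k * H.index * c := by
      calc θ * K * c = θ * (K * c) := by ring
        _ = θ * Nat.card G := by rw [← hC]
        _ = θ * (Nat.card H * H.index) := by rw [hLag]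
        _ = (θ * Nat.card H) * H.index := by ring
        _ = Nat.card {g : G | g * x * g⁻¹ ∈ H} * H.index := by rw [← hA]
        _ = (k * c) * H.index := by rw [hkB]
        _ = k * H.index * c := by ring
    exact Nat.eq_of_mul_eq_mul_right hcpos h1
  rw [key, Nat.mul_div_cancel _ (Nat.pos_of_ne_zero hind)]
end
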